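/- If a category with weak equivalences and cofibrations satisfies CF1–CF4 and CF5(1) (closure of cofibrations with cofibrant domains under small coproducts), then CF5(2) (small coproducts of trivial cofibrations with cofibrant domains are trivial cofibrations) holds if and only if the class of weak equivalences between cofibrant objects is stable under small coproducts. -/
import Mathlib


open CategoryTheory CategoryTheory.Limits

universe w v u

variable (C : Type u) [Category.{v} C] [HasInitial C]

/-- An Anderson–Brown–Cisinski precofibration category structure on `C`:
classes of weak equivalences `W` and cofibrations `Cof` satisfying the axioms CF1–CF4. -/
structure PrecofCat where
  /-- the class of weak equivalences -/
  W : MorphismProperty C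
  /-- the class of cofibrations -/
  Cof : MorphismProperty C
  /-- CF1: cofibrations are closed under composition -/
  cof_comp : ∀ {X Y Z : C} (f : X ⟶ Y) (g : Y ⟶ Z), Cof f → Cof g → Cof (f ≫ g)
  /-- CF1: the initial object is cofibrant -/
  initial_cofibrant : Cof (initial.to (⊥_ C))
  /-- CF1: isomorphisms are weak equivalences -/
  iso_W : ∀ {X Y : C} (f : X ⟶ Y), IsIso f → W f
  /-- CF1: isomorphisms with cofibrant domain are cofibrations -/
  iso_cof : ∀ {X Y : C} (f : X ⟶ Y), IsIso f → Cof (initial.to X) → Cof f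
  /-- CF2: two-out-of-three -/
  W_comp : ∀ {X Y Z : C} (f : X ⟶ Y) (g : Y ⟶ Z), W f → W g → W (f ≫ g)
  W_cancel_left : ∀ {X Y Z : C} (f : X ⟶ Y) (g : Y ⟶ Z), W f → W (f ≫ g) → W g
  W_cancel_right : ∀ {X Y Z : C} (f : X ⟶ Y) (g : Y ⟶ Z), W g → W (f ≫ g) → W f
  /-- CF3: pushouts of cofibrations with cofibrant corners exist -/
  pushout_exists : ∀ {A B X : C} (i : A ⟶ B) (f : A ⟶ X), Cof i →
      Cof (initial.to A) → Cof (initial.to X) →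
      ∃ (D : C) (g : B ⟶ D) (j : X ⟶ D), IsPushout i f g j
  /-- CF3: the pushout of a cofibration is a cofibration -/
  pushout_cof : ∀ {A B X D : C} (i : A ⟶ B) (f : A ⟶ X) (g : B ⟶ D) (j : X ⟶ D),
      Cof i → Cof (initial.to A) → Cof (initial.to X) → IsPushout i f g j → Cof j
  /-- CF3: the pushout of a trivial cofibration is a trivial cofibration -/
  pushout_triv_cof : ∀ {A B X D : C} (i : A ⟶ B) (f : A ⟶ X) (g : B ⟶ D) (j : X ⟶ D),
      Cof i → W i → Cof (initial.to A) → Cof (initial.to X) → IsPushout i f g j → W j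
  /-- CF4: factorization of maps with cofibrant domain -/
  factorization : ∀ {A B : C} (f : A ⟶ B), Cof (initial.to A) →
      ∃ (Z : C) (f' : A ⟶ Z) (r : Z ⟶ B), Cof f' ∧ W r ∧ f' ≫ r = f

variable {C}

/-- An object is cofibrant if the map from the initial object is a cofibration. -/
def PrecofCat.Cofibrant (P : PrecofCat C) (A : C) : Prop :=
  P.Cof (initial.to A)

omit [HasInitial C] in
/-- Two coproducts of the same family are comparable by an isomorphism. -/
lemma coprod_uniq_iso {I : Type w} {A : I → C} {S₁ S₂ : C}
    (ι₁ : ∀ i, A i ⟶ S₁) (ι₂ : ∀ i, A i ⟶ S₂)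
    (h₁ : ∀ (Z : C) (q : ∀ i, A i ⟶ Z), ∃! u : S₁ ⟶ Z, ∀ i, ι₁ i ≫ u = q i)
    (h₂ : ∀ (Z : C) (q : ∀ i, A i ⟶ Z), ∃! u : S₂ ⟶ Z, ∀ i, ι₂ i ≫ u = q i) :
    ∃ u : S₁ ⟶ S₂, (∀ i, ι₁ i ≫ u = ι₂ i) ∧ IsIso u := by
  obtain ⟨u, hu, -⟩ := h₁ S₂ ι₂
  obtain ⟨v, hv, -⟩ := h₂ S₁ ι₁
  refine ⟨u, hu, ⟨v, ?_, ?_⟩⟩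
  · obtain ⟨w, -, hw⟩ := h₁ S₁ ι₁
    rw [hw (u ≫ v) (by intro i; rw [← Category.assoc, hu, hv]), hw (𝟙 _) (by simp)]
  · obtain ⟨w, -, hw⟩ := h₂ S₂ ι₂
    rw [hw (v ≫ u) (by intro i; rw [← Category.assoc, hv, hu]), hw (𝟙 _) (by simp)]

/-- Brown's factorization: a weak equivalence between cofibrant objects factors as a
trivial cofibration followed by a weak equivalence admitting a section which is a
trivial cofibration. -/
lemma brown_factorization (P : PrecofCat C) {A B : C} (f : A ⟶ B) (hf : P.W f)
    (hA : P.Cofibrant A) (hB : P.Cofibrant B) :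
    ∃ (Z : C) (iA : A ⟶ Z) (s : B ⟶ Z) (r : Z ⟶ B),
      P.Cof iA ∧ P.W iA ∧ P.Cof s ∧ P.W s ∧ P.W r ∧
      iA ≫ r = f ∧ s ≫ r = 𝟙 B ∧ P.Cofibrant Z := by
  obtain ⟨D, inA, inB, hpo⟩ := P.pushout_exists (initial.to A) (initial.to B)
    hA P.initial_cofibrant hB
  have hCofInB : P.Cof inB := P.pushout_cof _ _ _ _ hA P.initial_cofibrant hB hpo
  have hCofInA : P.Cof inA := P.pushout_cof _ _ _ _ hB P.initial_cofibrant hA hpo.flip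
  have hcD : P.Cofibrant D := by
    have : initial.to D = initial.to A ≫ inA := initial.hom_ext _ _
    rw [PrecofCat.Cofibrant, this]
    exact P.cof_comp _ _ hA hCofInA
  -- the fold map D ⟶ B
  set q : D ⟶ B := hpo.desc f (𝟙 B) (initial.hom_ext _ _) with hq
  have hAq : inA ≫ q = f := hpo.inl_desc _ _ _
  have hBq : inB ≫ q = 𝟙 B := hpo.inr_desc _ _ _
  obtain ⟨Z, c, r, hCofc, hWr, hcr⟩ := P.factorization q hcD
  refine ⟨Z, inA ≫ c, inB ≫ c, r, P.cof_comp _ _ hCofInA hCofc, ?_,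
    P.cof_comp _ _ hCofInB hCofc, ?_, hWr, ?_, ?_, ?_⟩
  · apply P.W_cancel_right _ r hWr
    rw [Category.assoc, hcr, hAq]; exact hf
  · apply P.W_cancel_right _ r hWr
    rw [Category.assoc, hcr, hBq]
    exact P.iso_W _ inferInstance
  · rw [Category.assoc, hcr, hAq]
  · rw [Category.assoc, hcr, hBq]
  · have : initial.to Z = initial.to A ≫ inA ≫ c := initial.hom_ext _ _
    rw [PrecofCat.Cofibrant, this]
    exact P.cof_comp _ _ hA (P.cof_comp _ _ hCofInA hCofc)

/-- Assuming CF1–CF4 and CF5 (1), axiom CF5 (2) holds if and only if the class of weak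
equivalences between cofibrant objects is stable under small coproducts. -/
theorem cf5_two_iff_weq_stable_under_coproducts (P : PrecofCat C)
    (cf5one : ∀ {I : Type v} (A B : I → C) (f : ∀ i, A i ⟶ B i),
      (∀ i, P.Cof (f i)) → (∀ i, P.Cofibrant (A i)) →
      ∃ (SA SB : C) (ιA : ∀ i, A i ⟶ SA) (ιB : ∀ i, B i ⟶ SB) (g : SA ⟶ SB),
        (∀ (Z : C) (q : ∀ i, A i ⟶ Z), ∃! u : SA ⟶ Z, ∀ i, ιA i ≫ u = q i) ∧
        (∀ (Z : C) (q : ∀ i, B i ⟶ Z), ∃! u : SB ⟶ Z, ∀ i, ιB i ≫ u = q i) ∧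
        P.Cofibrant SA ∧ P.Cofibrant SB ∧ P.Cof g ∧ (∀ i, ιA i ≫ g = f i ≫ ιB i)) :
    -- CF5 (2): small coproducts of trivial cofibrations with cofibrant domains are
    -- trivial cofibrations
    (∀ {I : Type v} (A B : I → C) (f : ∀ i, A i ⟶ B i)
        (SA SB : C) (ιA : ∀ i, A i ⟶ SA) (ιB : ∀ i, B i ⟶ SB) (g : SA ⟶ SB),
        (∀ i, P.Cof (f i)) → (∀ i, P.W (f i)) → (∀ i, P.Cofibrant (A i)) →
        (∀ (Z : C) (q : ∀ i, A i ⟶ Z), ∃! u : SA ⟶ Z, ∀ i, ιA i ≫ u = q i) →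
        (∀ (Z : C) (q : ∀ i, B i ⟶ Z), ∃! u : SB ⟶ Z, ∀ i, ιB i ≫ u = q i) →
        (∀ i, ιA i ≫ g = f i ≫ ιB i) → P.W g)
      ↔
    -- weak equivalences between cofibrant objects are stable under small coproducts
    (∀ {I : Type v} (A B : I → C) (f : ∀ i, A i ⟶ B i)
        (SA SB : C) (ιA : ∀ i, A i ⟶ SA) (ιB : ∀ i, B i ⟶ SB) (g : SA ⟶ SB),
        (∀ i, P.W (f i)) → (∀ i, P.Cofibrant (A i)) → (∀ i, P.Cofibrant (B i)) →
        (∀ (Z : C) (q : ∀ i, A i ⟶ Z), ∃! u : SA ⟶ Z, ∀ i, ιA i ≫ u = q i) →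
        (∀ (Z : C) (q : ∀ i, B i ⟶ Z), ∃! u : SB ⟶ Z, ∀ i, ιB i ≫ u = q i) →
        (∀ i, ιA i ≫ g = f i ≫ ιB i) → P.W g) := by
  constructor
  · intro cf52 I A B f SA SB ιA ιB g hW hcA hcB hSA hSB hcomm
    choose Z iA s r hCofi hWi hCofs hWs hWr hir hsr hcZ using fun i =>
      brown_factorization P (f i) (hW i) (hcA i) (hcB i)
    obtain ⟨SA', SZ, ιA', ιZ, gI, uA', uZ, hcSA', hcSZ, hCofgI, hcompI⟩ :=
      cf5one A Z iA hCofi hcA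
    have hWgI : P.W gI := cf52 A Z iA SA' SZ ιA' ιZ gI hCofi hWi hcA uA' uZ hcompI
    obtain ⟨SB', SZ', ιB', ιZ', gS, uB', uZ', hcSB', hcSZ', hCofgS, hcompS⟩ :=
      cf5one B Z s hCofs hcB
    have hWgS : P.W gS := cf52 B Z s SB' SZ' ιB' ιZ' gS hCofs hWs hcB uB' uZ' hcompS
    obtain ⟨vA, hvA, hisoA⟩ := coprod_uniq_iso ιA ιA' hSA uA'
    obtain ⟨vB, hvB, hisoB⟩ := coprod_uniq_iso ιB ιB' hSB uB'
    obtain ⟨wZ, hwZ, hisoZ⟩ := coprod_uniq_iso ιZ' ιZ uZ' uZ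
    obtain ⟨r', hr', -⟩ := uZ SB (fun i => r i ≫ ιB i)
    have hWgI' : P.W (vA ≫ gI) := P.W_comp _ _ (P.iso_W _ hisoA) hWgI
    have hWs' : P.W (vB ≫ gS ≫ wZ) :=
      P.W_comp _ _ (P.iso_W _ hisoB) (P.W_comp _ _ hWgS (P.iso_W _ hisoZ))
    have hsr' : (vB ≫ gS ≫ wZ) ≫ r' = 𝟙 SB := by
      obtain ⟨w, -, hw⟩ := hSB SB ιB
      rw [hw ((vB ≫ gS ≫ wZ) ≫ r') (fun i => ?_), hw (𝟙 _) (by simp)]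
      simp only [Category.assoc]
      rw [reassoc_of% hvB i, reassoc_of% hcompS i, reassoc_of% hwZ i, hr',
        ← Category.assoc, hsr i, Category.id_comp]
    have hWr' : P.W r' := by
      apply P.W_cancel_left _ _ hWs'
      rw [hsr']
      exact P.iso_W _ inferInstance
    have hg : g = (vA ≫ gI) ≫ r' := by
      obtain ⟨w, -, hw⟩ := hSA SB (fun i => f i ≫ ιB i)
      rw [hw g hcomm, hw ((vA ≫ gI) ≫ r') (fun i => ?_)]
      simp only [Category.assoc]
      rw [reassoc_of% hvA i, reassoc_of% hcompI i, hr', ← Category.assoc, hir i]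
    rw [hg]
    exact P.W_comp _ _ hWgI' hWr'
  · intro hstable I A B f SA SB ιA ιB g hCof hW hcA hSA hSB hcomm
    have hcB : ∀ i, P.Cofibrant (B i) := fun i => by
      have : initial.to (B i) = initial.to (A i) ≫ f i := initial.hom_ext _ _
      rw [PrecofCat.Cofibrant, this]
      exact P.cof_comp _ _ (hcA i) (hCof i)
    exact hstable A B f SA SB ιA ιB g hW hcA hcB hSA hSB hcomm
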